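/- The compositional translation τ with τ(!) = P_1 T_3 P_2 T_1 and τ(?) = P_3 T_2 from SYNCSIMPLE to LOCKSIMPLE with three locks and initial store (empty, full, full) is correct: for every SYNCSIMPLE process P, P is may-convergent iff τ(P) is may-convergent, and P is must-convergent iff τ(P) is must-convergent. -/
import Mathlib


/-- Symbols of SYNCSIMPLE: `!` (bang) and `?` (ques). -/
inductive SSym | bang | ques
deriving DecidableEq

/-- A SYNCSIMPLE subprocess: a string over {!,?} ending with `0` (false) or `✓` (true). -/
abbrev SSub := List SSym × Bool

/-- A SYNCSIMPLE process: a multiset of subprocesses. -/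
abbrev SProc := Multiset SSub

/-- The SYS reduction: a leading `!` and a leading `?` of two subprocesses are consumed. -/
def SysStep (P Q : SProc) : Prop :=
  ∃ (u1 u2 : List SSym) (b1 b2 : Bool) (R : SProc),
    P = (SSym.bang :: u1, b1) ::ₘ (SSym.ques :: u2, b2) ::ₘ R ∧
    Q = (u1, b1) ::ₘ (u2, b2) ::ₘ R

/-- A process is successful if it contains the subprocess `✓`. -/
def SSuccessful (P : SProc) : Prop := (([], true) : SSub) ∈ P

def SMayConv (P : SProc) : Prop :=
  ∃ Q, Relation.ReflTransGen SysStep P Q ∧ SSuccessful Q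

def SMustConv (P : SProc) : Prop :=
  ∀ Q, Relation.ReflTransGen SysStep P Q → SMayConv Q

/-- Lock operations: put `P_i` and take `T_i`. -/
inductive LOp | put | take
deriving DecidableEq

abbrev LSym (k : ℕ) := LOp × Fin k
abbrev LSub (k : ℕ) := List (LSym k) × Bool
abbrev LProc (k : ℕ) := Multiset (LSub k)
/-- The store of `k` locks: `true` = full (■), `false` = empty (□). -/
abbrev Store (k : ℕ) := Fin k → Bool

/-- LOCKSIMPLE step: `P_i` fills an empty lock `i` (blocks if full);
    `T_i` empties lock `i` and never blocks. -/
def LockStep {k : ℕ} : (LProc k × Store k) → (LProc k × Store k) → Prop :=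
  fun s t => ∃ (i : Fin k) (u : List (LSym k)) (b : Bool) (R : LProc k),
    ((s.1 = ((LOp.put, i) :: u, b) ::ₘ R ∧ s.2 i = false ∧
      t.1 = (u, b) ::ₘ R ∧ t.2 = Function.update s.2 i true) ∨
     (s.1 = ((LOp.take, i) :: u, b) ::ₘ R ∧
      t.1 = (u, b) ::ₘ R ∧ t.2 = Function.update s.2 i false))

def LSuccessful {k : ℕ} (s : LProc k × Store k) : Prop := (([], true) : LSub k) ∈ s.1

def LMayConv {k : ℕ} (s : LProc k × Store k) : Prop :=
  ∃ t, Relation.ReflTransGen LockStep s t ∧ LSuccessful t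

def LMustConv {k : ℕ} (s : LProc k × Store k) : Prop :=
  ∀ t, Relation.ReflTransGen LockStep s t → LMayConv t

/-- The compositional translation determined by the strings `tb = τ(!)` and `tq = τ(?)`,
    applied to a subprocess. -/
def transSub {k : ℕ} (tb tq : List (LSym k)) (u : SSub) : LSub k :=
  (u.1.flatMap (fun c => match c with | SSym.bang => tb | SSym.ques => tq), u.2)

/-- The compositional translation applied to a process. -/
def transProc {k : ℕ} (tb tq : List (LSym k)) (P : SProc) : LProc k :=
  P.map (transSub tb tq)

/-- Correctness of the compositional translation `(tb, tq)` with initial store `IS`: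
    may- and must-convergence are preserved and reflected. -/
def Correct {k : ℕ} (IS : Store k) (tb tq : List (LSym k)) : Prop :=
  ∀ P : SProc,
    (SMayConv P ↔ LMayConv (transProc tb tq P, IS)) ∧
    (SMustConv P ↔ LMustConv (transProc tb tq P, IS))

/-- The solo execution of the string `s` from store `IS` reaches the point where
    `(put, i) :: rest` remains and deadlocks there since lock `i` is full. -/
def SoloBlocked {k : ℕ} (IS : Store k) (s : List (LSym k)) (i : Fin k)
    (rest : List (LSym k)) : Prop :=
  ∃ C : Store k,
    Relation.ReflTransGen LockStep (({(s, false)} : LProc k), IS)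
      (({((LOp.put, i) :: rest, false)} : LProc k), C) ∧
    C i = true

/-- Blocking type `P_i`: the blocking prefix is `R P_i` with `R` free of `P_i, T_i`. -/
def BlockingTypeP {k : ℕ} (IS : Store k) (s : List (LSym k)) (i : Fin k) : Prop :=
  ∃ r rest, s = r ++ (LOp.put, i) :: rest ∧ (∀ x ∈ r, x.2 ≠ i) ∧
    SoloBlocked IS s i rest

/-- Blocking type `P_i P_i`: the blocking prefix is `R₁ P_i R₂ P_i` with
    `R₂` free of `P_i, T_i`, deadlocking exactly before the last `P_i`. -/
def BlockingTypePP {k : ℕ} (IS : Store k) (s : List (LSym k)) (i : Fin k) : Prop :=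
  ∃ r1 r2 rest, s = r1 ++ (LOp.put, i) :: r2 ++ (LOp.put, i) :: rest ∧
    (∀ x ∈ r2, x.2 ≠ i) ∧ SoloBlocked IS s i rest

/-- `τ(!) = P_1 T_3 P_2 T_1`. -/
def tb3 : List (LSym 3) :=
  [(LOp.put, 0), (LOp.take, 2), (LOp.put, 1), (LOp.take, 0)]

/-- `τ(?) = P_3 T_2`. -/
def tq3 : List (LSym 3) := [(LOp.put, 2), (LOp.take, 1)]

/-- Initial store `(□, ■, ■)`. -/
def IS3 : Store 3 := ![false, true, true]
section ThreeLockProof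
open SSym LOp Relation

/-- Translation of a process, specialized. -/
abbrev TR : SProc → LProc 3 := transProc tb3 tq3

def flatS (u : List SSym) : List (LSym 3) :=
  u.flatMap (fun c => match c with | SSym.bang => tb3 | SSym.ques => tq3)

lemma transSub_eq (u : List SSym) (b : Bool) :
    transSub tb3 tq3 (u, b) = (flatS u, b) := rfl

lemma flatS_bang (u : List SSym) :
    flatS (SSym.bang :: u)
      = (LOp.put,0) :: (LOp.take,2) :: (LOp.put,1) :: (LOp.take,0) :: flatS u := rfl

lemma flatS_ques (u : List SSym) :
    flatS (SSym.ques :: u) = (LOp.put,2) :: (LOp.take,1) :: flatS u := rfl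

lemma TR_cons (x : SSub) (R : SProc) :
    TR (x ::ₘ R) = transSub tb3 tq3 x ::ₘ TR R := Multiset.map_cons _ _ _

lemma TR_bang (u : List SSym) (b : Bool) (R : SProc) :
    TR ((SSym.bang :: u, b) ::ₘ R)
      = (((LOp.put,0) : LSym 3) :: (LOp.take,2) :: (LOp.put,1) :: (LOp.take,0) :: flatS u, b) ::ₘ TR R :=
  TR_cons _ _

lemma TR_ques (u : List SSym) (b : Bool) (R : SProc) :
    TR ((SSym.ques :: u, b) ::ₘ R)
      = (((LOp.put,2) : LSym 3) :: (LOp.take,1) :: flatS u, b) ::ₘ TR R :=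
  TR_cons _ _

def ST3 : Store 3 := ![true,true,true]
def STTF : Store 3 := ![true,true,false]
def STFT : Store 3 := ![true,false,true]

lemma upd_01 : Function.update IS3 0 true = ST3 := by decide
lemma upd_2f : Function.update ST3 2 false = STTF := by decide
lemma upd_2t : Function.update STTF 2 true = ST3 := by decide
lemma upd_1f : Function.update ST3 1 false = STFT := by decide
lemma upd_1t : Function.update STFT 1 true = ST3 := by decide
lemma upd_0f : Function.update ST3 0 false = IS3 := by decide

lemma ST3_true (i : Fin 3) : ST3 i = true := by fin_cases i <;> rfl
lemma IS3_false {i : Fin 3} (h : IS3 i = false) : i = 0 := by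
  fin_cases i
  · rfl
  · exact absurd h (by decide)
  · exact absurd h (by decide)
lemma STTF_false {i : Fin 3} (h : STTF i = false) : i = 2 := by
  fin_cases i
  · exact absurd h (by decide)
  · exact absurd h (by decide)
  · rfl
lemma STFT_false {i : Fin 3} (h : STFT i = false) : i = 1 := by
  fin_cases i
  · exact absurd h (by decide)
  · rfl
  · exact absurd h (by decide)

lemma cons_cancel {α} {A : α} {M N : Multiset α} (h : A ::ₘ M = A ::ₘ N) : M = N :=
  (Multiset.cons_inj_right A).mp h

lemma swap_cancel {α} {A B : α} {M N : Multiset α} (h : A ::ₘ B ::ₘ M = B ::ₘ N) :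
    N = A ::ₘ M := by
  rw [Multiset.cons_swap] at h
  exact (cons_cancel h).symm

lemma mem_TR {X : LSub 3} {R : SProc} (h : X ∈ TR R) :
    ∃ v bb, (v, bb) ∈ R ∧ X = (flatS v, bb) := by
  obtain ⟨⟨v, bb⟩, hv, he⟩ := Multiset.mem_map.mp h
  exact ⟨v, bb, hv, he.symm⟩

lemma no_take_TR {i : Fin 3} {u : List (LSym 3)} {b : Bool} {R : SProc}
    (h : ((LOp.take, i) :: u, b) ∈ TR R) : False := by
  obtain ⟨v, bb, hv, he⟩ := mem_TR h
  cases v with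
  | nil => simp [flatS] at he
  | cons c v' =>
    cases c
    · rw [flatS_bang] at he; simp at he
    · rw [flatS_ques] at he; simp at he

lemma put_TR {i : Fin 3} {u : List (LSym 3)} {b : Bool} {R : SProc}
    (h : ((LOp.put, i) :: u, b) ∈ TR R) :
    (i = 0 ∧ ∃ v, (SSym.bang :: v, b) ∈ R ∧
        u = (LOp.take,2) :: (LOp.put,1) :: (LOp.take,0) :: flatS v) ∨
    (i = 2 ∧ ∃ v, (SSym.ques :: v, b) ∈ R ∧ u = (LOp.take,1) :: flatS v) := by
  obtain ⟨v, bb, hv, he⟩ := mem_TR h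
  cases v with
  | nil => simp [flatS] at he
  | cons c v' =>
    cases c
    · rw [flatS_bang] at he
      simp only [Prod.mk.injEq, List.cons.injEq] at he
      obtain ⟨⟨⟨-, hi⟩, hu⟩, hb⟩ := he
      subst hb
      exact Or.inl ⟨hi, v', hv, hu⟩
    · rw [flatS_ques] at he
      simp only [Prod.mk.injEq, List.cons.injEq] at he
      obtain ⟨⟨⟨-, hi⟩, hu⟩, hb⟩ := he
      subst hb
      exact Or.inr ⟨hi, v', hv, hu⟩

lemma success_TR {R : SProc} (h : (([], true) : LSub 3) ∈ TR R) :
    (([], true) : SSub) ∈ R := by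
  obtain ⟨v, bb, hv, he⟩ := mem_TR h
  cases v with
  | nil =>
    simp [flatS] at he
    rwa [he] at hv
  | cons c v' =>
    cases c
    · rw [flatS_bang] at he; simp at he
    · rw [flatS_ques] at he; simp at he

end ThreeLockProof
section ThreeLockProof2
open SSym LOp Relation

/-- Invariant: the reachable configurations of a translated process, organized by
the 6 phases of the synchronization cycle. -/
inductive TInv : SProc → LProc 3 × Store 3 → Prop
  | phase0 (P : SProc) : TInv P (TR P, IS3)
  | phase1 (u1 : List SSym) (b1 : Bool) (R : SProc) :
      TInv ((SSym.bang :: u1, b1) ::ₘ R)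
        ((((LOp.take,2) : LSym 3) :: (LOp.put,1) :: (LOp.take,0) :: flatS u1, b1) ::ₘ TR R, ST3)
  | phase2 (u1 : List SSym) (b1 : Bool) (R : SProc) :
      TInv ((SSym.bang :: u1, b1) ::ₘ R)
        ((((LOp.put,1) : LSym 3) :: (LOp.take,0) :: flatS u1, b1) ::ₘ TR R, STTF)
  | phase3 (u1 : List SSym) (b1 : Bool) (u2 : List SSym) (b2 : Bool) (R : SProc) :
      TInv ((SSym.bang :: u1, b1) ::ₘ (SSym.ques :: u2, b2) ::ₘ R)
        ((((LOp.put,1) : LSym 3) :: (LOp.take,0) :: flatS u1, b1) ::ₘ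
          (((LOp.take,1) : LSym 3) :: flatS u2, b2) ::ₘ TR R, ST3)
  | phase4 (u1 : List SSym) (b1 : Bool) (u2 : List SSym) (b2 : Bool) (R : SProc) :
      TInv ((SSym.bang :: u1, b1) ::ₘ (SSym.ques :: u2, b2) ::ₘ R)
        ((((LOp.put,1) : LSym 3) :: (LOp.take,0) :: flatS u1, b1) ::ₘ
          (flatS u2, b2) ::ₘ TR R, STFT)
  | phase5 (u1 : List SSym) (b1 : Bool) (u2 : List SSym) (b2 : Bool) (R : SProc) :
      TInv ((SSym.bang :: u1, b1) ::ₘ (SSym.ques :: u2, b2) ::ₘ R)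
        ((((LOp.take,0) : LSym 3) :: flatS u1, b1) ::ₘ (flatS u2, b2) ::ₘ TR R, ST3)

lemma flat_no_take {v : List SSym} {i : Fin 3} {u : List (LSym 3)}
    (h : flatS v = (LOp.take, i) :: u) : False := by
  cases v with
  | nil => simp [flatS] at h
  | cons c v' => cases c
                 · rw [flatS_bang] at h; simp at h
                 · rw [flatS_ques] at h; simp at h

lemma flat_no_put1 {v : List SSym} {u : List (LSym 3)}
    (h : flatS v = ((LOp.put, 1) : LSym 3) :: u) : False := by
  cases v with
  | nil => simp [flatS] at h
  | cons c v' => cases c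
                 · rw [flatS_bang] at h; simp at h
                 · rw [flatS_ques] at h; simp at h

lemma inv_step {P : SProc} {s t : LProc 3 × Store 3} (hi : TInv P s) (hs : LockStep s t) :
    (∃ Q, SysStep P Q ∧ TInv Q t) ∨ TInv P t := by
  obtain ⟨t1, t2⟩ := t
  obtain ⟨i, u, b, Rst, hcase⟩ := hs
  cases hi with
  | phase0 P =>
    rcases hcase with ⟨h1, hf, h3, h4⟩ | ⟨h1, h3, h4⟩
    · -- a put fires from the initial store: i = 0, start a bang block
      replace h1 : TR P = ((LOp.put, i) :: u, b) ::ₘ Rst := h1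
      replace hf : IS3 i = false := hf
      obtain rfl := IS3_false hf
      have hmem : ((LOp.put, (0:Fin 3)) :: u, b) ∈ TR P := by
        rw [h1]; exact Multiset.mem_cons_self _ _
      rcases put_TR hmem with ⟨-, v, hvP, hu⟩ | ⟨h02, -⟩
      · subst hu
        obtain ⟨P0, rfl⟩ : ∃ P0, P = (SSym.bang :: v, b) ::ₘ P0 :=
          ⟨_, (Multiset.cons_erase hvP).symm⟩
        rw [TR_bang] at h1
        have hR : Rst = TR P0 := (cons_cancel h1).symm
        right
        replace h3 : t1 = (_, b) ::ₘ Rst := h3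
        replace h4 : t2 = Function.update IS3 0 true := h4
        rw [h3, hR, h4, upd_01]
        exact TInv.phase1 v b P0
      · exact absurd h02 (by decide)
    · -- no take can fire from a fully translated process
      replace h1 : TR P = ((LOp.take, i) :: u, b) ::ₘ Rst := h1
      exact absurd (by rw [h1]; exact Multiset.mem_cons_self _ _) (fun h => no_take_TR h)
  | phase1 u1 b1 R =>
    rcases hcase with ⟨h1, hf, h3, h4⟩ | ⟨h1, h3, h4⟩
    · exact absurd (ST3_true i) (by replace hf : ST3 i = false := hf; rw [hf]; simp)
    · replace h1 : (((LOp.take,2) : LSym 3) :: (LOp.put,1) :: (LOp.take,0) :: flatS u1, b1) ::ₘ TR R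
        = ((LOp.take, i) :: u, b) ::ₘ Rst := h1
      have hmem : ((LOp.take, i) :: u, b) ∈
          (((LOp.take,2) : LSym 3) :: (LOp.put,1) :: (LOp.take,0) :: flatS u1, b1) ::ₘ TR R := by
        rw [h1]; exact Multiset.mem_cons_self _ _
      rcases Multiset.mem_cons.mp hmem with heq | hmem'
      · simp only [Prod.mk.injEq, List.cons.injEq] at heq
        obtain ⟨⟨⟨-, hi⟩, hu⟩, hb⟩ := heq
        subst hi; subst hu; subst hb
        have hR : Rst = TR R := (cons_cancel h1.symm)
        right
        replace h3 : t1 = _ ::ₘ Rst := h3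
        replace h4 : t2 = Function.update ST3 2 false := h4
        rw [h3, hR, h4, upd_2f]
        exact TInv.phase2 u1 b R
      · exact absurd hmem' (fun h => no_take_TR h)
  | phase2 u1 b1 R =>
    rcases hcase with ⟨h1, hf, h3, h4⟩ | ⟨h1, h3, h4⟩
    · -- put case: must be put 2, i.e. a ques block starts
      replace hf : STTF i = false := hf
      obtain rfl := STTF_false hf
      replace h1 : (((LOp.put,1) : LSym 3) :: (LOp.take,0) :: flatS u1, b1) ::ₘ TR R
        = ((LOp.put, (2:Fin 3)) :: u, b) ::ₘ Rst := h1
      have hmem : ((LOp.put, (2:Fin 3)) :: u, b) ∈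
          (((LOp.put,1) : LSym 3) :: (LOp.take,0) :: flatS u1, b1) ::ₘ TR R := by
        rw [h1]; exact Multiset.mem_cons_self _ _
      rcases Multiset.mem_cons.mp hmem with heq | hmem'
      · simp only [Prod.mk.injEq, List.cons.injEq] at heq
        obtain ⟨⟨⟨-, hi⟩, -⟩, -⟩ := heq
        exact absurd hi (by decide)
      · rcases put_TR hmem' with ⟨h20, -⟩ | ⟨-, v, hvR, hu⟩
        · exact absurd h20 (by decide)
        · subst hu
          obtain ⟨R0, rfl⟩ : ∃ R0, R = (SSym.ques :: v, b) ::ₘ R0 :=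
            ⟨_, (Multiset.cons_erase hvR).symm⟩
          rw [TR_ques] at h1
          have hRst := swap_cancel h1
          right
          replace h3 : t1 = (_, b) ::ₘ Rst := h3
          replace h4 : t2 = Function.update STTF 2 true := h4
          rw [hRst, Multiset.cons_swap] at h3
          rw [h3, h4, upd_2t]
          exact TInv.phase3 u1 b1 v b R0
    · -- no take available in phase 2
      replace h1 : (((LOp.put,1) : LSym 3) :: (LOp.take,0) :: flatS u1, b1) ::ₘ TR R
        = ((LOp.take, i) :: u, b) ::ₘ Rst := h1
      have hmem : ((LOp.take, i) :: u, b) ∈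
          (((LOp.put,1) : LSym 3) :: (LOp.take,0) :: flatS u1, b1) ::ₘ TR R := by
        rw [h1]; exact Multiset.mem_cons_self _ _
      rcases Multiset.mem_cons.mp hmem with heq | hmem'
      · simp only [Prod.mk.injEq, List.cons.injEq] at heq
        obtain ⟨⟨⟨hop, -⟩, -⟩, -⟩ := heq
        exact absurd hop (by simp)
      · exact absurd hmem' (fun h => no_take_TR h)
  | phase3 u1 b1 u2 b2 R =>
    rcases hcase with ⟨h1, hf, h3, h4⟩ | ⟨h1, h3, h4⟩
    · exact absurd (ST3_true i) (by replace hf : ST3 i = false := hf; rw [hf]; simp)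
    · replace h1 : (((LOp.put,1) : LSym 3) :: (LOp.take,0) :: flatS u1, b1) ::ₘ
          (((LOp.take,1) : LSym 3) :: flatS u2, b2) ::ₘ TR R
        = ((LOp.take, i) :: u, b) ::ₘ Rst := h1
      have hmem : ((LOp.take, i) :: u, b) ∈
          (((LOp.put,1) : LSym 3) :: (LOp.take,0) :: flatS u1, b1) ::ₘ
            (((LOp.take,1) : LSym 3) :: flatS u2, b2) ::ₘ TR R := by
        rw [h1]; exact Multiset.mem_cons_self _ _
      rcases Multiset.mem_cons.mp hmem with heq | hmem'
      · simp only [Prod.mk.injEq, List.cons.injEq] at heq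
        obtain ⟨⟨⟨hop, -⟩, -⟩, -⟩ := heq
        exact absurd hop (by simp)
      · rcases Multiset.mem_cons.mp hmem' with heq | hmem''
        · simp only [Prod.mk.injEq, List.cons.injEq] at heq
          obtain ⟨⟨⟨-, hi⟩, hu⟩, hb⟩ := heq
          subst hi; subst hu; subst hb
          have hRst := swap_cancel h1
          right
          replace h3 : t1 = _ ::ₘ Rst := h3
          replace h4 : t2 = Function.update ST3 1 false := h4
          rw [hRst, Multiset.cons_swap] at h3
          rw [h3, h4, upd_1f]
          exact TInv.phase4 u1 b1 u2 b R
        · exact absurd hmem'' (fun h => no_take_TR h)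
  | phase4 u1 b1 u2 b2 R =>
    rcases hcase with ⟨h1, hf, h3, h4⟩ | ⟨h1, h3, h4⟩
    · replace hf : STFT i = false := hf
      obtain rfl := STFT_false hf
      replace h1 : (((LOp.put,1) : LSym 3) :: (LOp.take,0) :: flatS u1, b1) ::ₘ
          (flatS u2, b2) ::ₘ TR R
        = ((LOp.put, (1:Fin 3)) :: u, b) ::ₘ Rst := h1
      have hmem : ((LOp.put, (1:Fin 3)) :: u, b) ∈
          (((LOp.put,1) : LSym 3) :: (LOp.take,0) :: flatS u1, b1) ::ₘ
            (flatS u2, b2) ::ₘ TR R := by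
        rw [h1]; exact Multiset.mem_cons_self _ _
      rcases Multiset.mem_cons.mp hmem with heq | hmem'
      · simp only [Prod.mk.injEq, List.cons.injEq] at heq
        obtain ⟨⟨⟨-, -⟩, hu⟩, hb⟩ := heq
        subst hu; subst hb
        have hR : Rst = (flatS u2, b2) ::ₘ TR R := (cons_cancel h1).symm
        right
        replace h3 : t1 = _ ::ₘ Rst := h3
        replace h4 : t2 = Function.update STFT 1 true := h4
        rw [h3, hR, h4, upd_1t]
        exact TInv.phase5 u1 b u2 b2 R
      · rcases Multiset.mem_cons.mp hmem' with heq | hmem''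
        · simp only [Prod.mk.injEq] at heq
          exact absurd heq.1.symm (fun h => flat_no_put1 h)
        · rcases put_TR hmem'' with ⟨h10, -⟩ | ⟨h12, -⟩
          · exact absurd h10 (by decide)
          · exact absurd h12 (by decide)
    · replace h1 : (((LOp.put,1) : LSym 3) :: (LOp.take,0) :: flatS u1, b1) ::ₘ
          (flatS u2, b2) ::ₘ TR R
        = ((LOp.take, i) :: u, b) ::ₘ Rst := h1
      have hmem : ((LOp.take, i) :: u, b) ∈
          (((LOp.put,1) : LSym 3) :: (LOp.take,0) :: flatS u1, b1) ::ₘ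
            (flatS u2, b2) ::ₘ TR R := by
        rw [h1]; exact Multiset.mem_cons_self _ _
      rcases Multiset.mem_cons.mp hmem with heq | hmem'
      · simp only [Prod.mk.injEq, List.cons.injEq] at heq
        obtain ⟨⟨⟨hop, -⟩, -⟩, -⟩ := heq
        exact absurd hop (by simp)
      · rcases Multiset.mem_cons.mp hmem' with heq | hmem''
        · simp only [Prod.mk.injEq] at heq
          exact absurd heq.1.symm (fun h => flat_no_take h)
        · exact absurd hmem'' (fun h => no_take_TR h)
  | phase5 u1 b1 u2 b2 R =>
    rcases hcase with ⟨h1, hf, h3, h4⟩ | ⟨h1, h3, h4⟩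
    · exact absurd (ST3_true i) (by replace hf : ST3 i = false := hf; rw [hf]; simp)
    · replace h1 : (((LOp.take,0) : LSym 3) :: flatS u1, b1) ::ₘ (flatS u2, b2) ::ₘ TR R
        = ((LOp.take, i) :: u, b) ::ₘ Rst := h1
      have hmem : ((LOp.take, i) :: u, b) ∈
          (((LOp.take,0) : LSym 3) :: flatS u1, b1) ::ₘ (flatS u2, b2) ::ₘ TR R := by
        rw [h1]; exact Multiset.mem_cons_self _ _
      rcases Multiset.mem_cons.mp hmem with heq | hmem'
      · simp only [Prod.mk.injEq, List.cons.injEq] at heq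
        obtain ⟨⟨⟨-, hi⟩, hu⟩, hb⟩ := heq
        subst hi; subst hu; subst hb
        have hR : Rst = (flatS u2, b2) ::ₘ TR R := (cons_cancel h1).symm
        left
        refine ⟨(u1, b) ::ₘ (u2, b2) ::ₘ R, ⟨u1, u2, b, b2, R, rfl, rfl⟩, ?_⟩
        replace h3 : t1 = _ ::ₘ Rst := h3
        replace h4 : t2 = Function.update ST3 0 false := h4
        rw [h3, hR, h4, upd_0f]
        have : TR ((u1, b) ::ₘ (u2, b2) ::ₘ R)
            = (flatS u1, b) ::ₘ (flatS u2, b2) ::ₘ TR R := by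
          rw [TR_cons, TR_cons, transSub_eq, transSub_eq]
        rw [← this]
        exact TInv.phase0 _
      · rcases Multiset.mem_cons.mp hmem' with heq | hmem''
        · simp only [Prod.mk.injEq] at heq
          exact absurd heq.1.symm (fun h => flat_no_take h)
        · exact absurd hmem'' (fun h => no_take_TR h)

end ThreeLockProof2
section ThreeLockProof3
open SSym LOp Relation

lemma flat_nil {v : List SSym} (h : flatS v = []) : v = [] := by
  cases v with
  | nil => rfl
  | cons c v' => cases c
                 · rw [flatS_bang] at h; simp at h
                 · rw [flatS_ques] at h; simp at h

lemma smay_of_succ {P : SProc} (h : SSuccessful P) : SMayConv P :=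
  ⟨P, ReflTransGen.refl, h⟩

/-- For phases 4/5: if the ques-component finished as `✓`, the source converges in one step. -/
lemma smay_pair {u1 : List SSym} {b1 : Bool} {R : SProc} :
    SMayConv ((SSym.bang :: u1, b1) ::ₘ (SSym.ques :: ([] : List SSym), true) ::ₘ R) := by
  refine ⟨(u1, b1) ::ₘ (([] : List SSym), true) ::ₘ R,
    ReflTransGen.single ⟨u1, [], b1, true, R, rfl, rfl⟩, ?_⟩
  exact Multiset.mem_cons_of_mem (Multiset.mem_cons_self _ _)

lemma inv_success {P : SProc} {t : LProc 3 × Store 3} (hi : TInv P t)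
    (ht : LSuccessful t) : SMayConv P := by
  cases hi with
  | phase0 P => exact smay_of_succ (success_TR ht)
  | phase1 u1 b1 R =>
    rcases Multiset.mem_cons.mp ht with heq | hm
    · simp at heq
    · exact smay_of_succ (Multiset.mem_cons_of_mem (success_TR hm))
  | phase2 u1 b1 R =>
    rcases Multiset.mem_cons.mp ht with heq | hm
    · simp at heq
    · exact smay_of_succ (Multiset.mem_cons_of_mem (success_TR hm))
  | phase3 u1 b1 u2 b2 R =>
    rcases Multiset.mem_cons.mp ht with heq | hm
    · simp at heq
    · rcases Multiset.mem_cons.mp hm with heq | hm'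
      · simp at heq
      · exact smay_of_succ
          (Multiset.mem_cons_of_mem (Multiset.mem_cons_of_mem (success_TR hm')))
  | phase4 u1 b1 u2 b2 R =>
    rcases Multiset.mem_cons.mp ht with heq | hm
    · simp at heq
    · rcases Multiset.mem_cons.mp hm with heq | hm'
      · simp only [Prod.mk.injEq] at heq
        obtain ⟨hu, hb⟩ := heq
        obtain rfl := flat_nil hu.symm
        subst hb
        exact smay_pair
      · exact smay_of_succ
          (Multiset.mem_cons_of_mem (Multiset.mem_cons_of_mem (success_TR hm')))
  | phase5 u1 b1 u2 b2 R =>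
    rcases Multiset.mem_cons.mp ht with heq | hm
    · simp at heq
    · rcases Multiset.mem_cons.mp hm with heq | hm'
      · simp only [Prod.mk.injEq] at heq
        obtain ⟨hu, hb⟩ := heq
        obtain rfl := flat_nil hu.symm
        subst hb
        exact smay_pair
      · exact smay_of_succ
          (Multiset.mem_cons_of_mem (Multiset.mem_cons_of_mem (success_TR hm')))

/-! Forward execution chains. -/

lemma lstep_put {s t : LProc 3 × Store 3} (i : Fin 3) (u : List (LSym 3)) (b : Bool)
    (R : LProc 3) (h1 : s.1 = ((LOp.put, i) :: u, b) ::ₘ R) (h2 : s.2 i = false)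
    (h3 : t.1 = (u, b) ::ₘ R) (h4 : t.2 = Function.update s.2 i true) : LockStep s t :=
  ⟨i, u, b, R, Or.inl ⟨h1, h2, h3, h4⟩⟩

lemma lstep_take {s t : LProc 3 × Store 3} (i : Fin 3) (u : List (LSym 3)) (b : Bool)
    (R : LProc 3) (h1 : s.1 = ((LOp.take, i) :: u, b) ::ₘ R)
    (h3 : t.1 = (u, b) ::ₘ R) (h4 : t.2 = Function.update s.2 i false) : LockStep s t :=
  ⟨i, u, b, R, Or.inr ⟨h1, h3, h4⟩⟩

lemma chain5 (u1 : List SSym) (b1 : Bool) (u2 : List SSym) (b2 : Bool) (R : SProc) :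
    ReflTransGen LockStep
      ((((LOp.take,0) : LSym 3) :: flatS u1, b1) ::ₘ (flatS u2, b2) ::ₘ TR R, ST3)
      (TR ((u1, b1) ::ₘ (u2, b2) ::ₘ R), IS3) := by
  refine ReflTransGen.single (lstep_take 0 (flatS u1) b1 ((flatS u2, b2) ::ₘ TR R) rfl ?_ ?_)
  · rw [TR_cons, TR_cons, transSub_eq, transSub_eq]
  · exact upd_0f.symm

lemma chain4 (u1 : List SSym) (b1 : Bool) (u2 : List SSym) (b2 : Bool) (R : SProc) :
    ReflTransGen LockStep
      ((((LOp.put,1) : LSym 3) :: (LOp.take,0) :: flatS u1, b1) ::ₘ (flatS u2, b2) ::ₘ TR R, STFT)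
      (TR ((u1, b1) ::ₘ (u2, b2) ::ₘ R), IS3) :=
  ReflTransGen.head
    (lstep_put 1 ((LOp.take,0) :: flatS u1) b1 ((flatS u2, b2) ::ₘ TR R) rfl (show STFT 1 = false by decide)
      rfl upd_1t.symm)
    (chain5 u1 b1 u2 b2 R)

lemma chain3 (u1 : List SSym) (b1 : Bool) (u2 : List SSym) (b2 : Bool) (R : SProc) :
    ReflTransGen LockStep
      ((((LOp.put,1) : LSym 3) :: (LOp.take,0) :: flatS u1, b1) ::ₘ
        (((LOp.take,1) : LSym 3) :: flatS u2, b2) ::ₘ TR R, ST3)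
      (TR ((u1, b1) ::ₘ (u2, b2) ::ₘ R), IS3) :=
  ReflTransGen.head
    (lstep_take 1 (flatS u2) b2
      ((((LOp.put,1) : LSym 3) :: (LOp.take,0) :: flatS u1, b1) ::ₘ TR R)
      (Multiset.cons_swap _ _ _) (Multiset.cons_swap _ _ _) upd_1f.symm)
    (chain4 u1 b1 u2 b2 R)

lemma chain2 (u1 : List SSym) (b1 : Bool) (u2 : List SSym) (b2 : Bool) (R : SProc) :
    ReflTransGen LockStep
      ((((LOp.put,1) : LSym 3) :: (LOp.take,0) :: flatS u1, b1) ::ₘ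
        TR ((SSym.ques :: u2, b2) ::ₘ R), STTF)
      (TR ((u1, b1) ::ₘ (u2, b2) ::ₘ R), IS3) :=
  ReflTransGen.head
    (lstep_put 2 (((LOp.take,1) : LSym 3) :: flatS u2) b2
      ((((LOp.put,1) : LSym 3) :: (LOp.take,0) :: flatS u1, b1) ::ₘ TR R)
      (by rw [TR_ques]; exact Multiset.cons_swap _ _ _) (show STTF 2 = false by decide)
      (Multiset.cons_swap _ _ _) upd_2t.symm)
    (chain3 u1 b1 u2 b2 R)

lemma chain1 (u1 : List SSym) (b1 : Bool) (R : SProc) :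
    ReflTransGen LockStep
      ((((LOp.take,2) : LSym 3) :: (LOp.put,1) :: (LOp.take,0) :: flatS u1, b1) ::ₘ TR R, ST3)
      ((((LOp.put,1) : LSym 3) :: (LOp.take,0) :: flatS u1, b1) ::ₘ TR R, STTF) :=
  ReflTransGen.single
    (lstep_take 2 (((LOp.put,1) : LSym 3) :: (LOp.take,0) :: flatS u1) b1 (TR R)
      rfl rfl upd_2f.symm)

lemma cycle (u1 : List SSym) (b1 : Bool) (u2 : List SSym) (b2 : Bool) (R : SProc) :
    ReflTransGen LockStep
      (TR ((SSym.bang :: u1, b1) ::ₘ (SSym.ques :: u2, b2) ::ₘ R), IS3)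
      (TR ((u1, b1) ::ₘ (u2, b2) ::ₘ R), IS3) :=
  ReflTransGen.head
    (lstep_put 0 (((LOp.take,2) : LSym 3) :: (LOp.put,1) :: (LOp.take,0) :: flatS u1) b1
      (TR ((SSym.ques :: u2, b2) ::ₘ R)) (TR_bang _ _ _) (show IS3 0 = false by decide) rfl upd_01.symm)
    ((chain1 u1 b1 ((SSym.ques :: u2, b2) ::ₘ R)).trans (chain2 u1 b1 u2 b2 R))

lemma sys_to_lock {P Q : SProc} (h : SysStep P Q) :
    ReflTransGen LockStep (TR P, IS3) (TR Q, IS3) := by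
  obtain ⟨u1, u2, b1, b2, R, hP, hQ⟩ := h
  subst hP; subst hQ
  exact cycle u1 b1 u2 b2 R

lemma rtg_sys_to_lock {P Q : SProc} (h : ReflTransGen SysStep P Q) :
    ReflTransGen LockStep (TR P, IS3) (TR Q, IS3) := by
  induction h with
  | refl => exact ReflTransGen.refl
  | tail _ hstep ih => exact ih.trans (sys_to_lock hstep)

lemma may_forward {P : SProc} (h : SMayConv P) : LMayConv (TR P, IS3) := by
  obtain ⟨Q, hr, hs⟩ := h
  exact ⟨(TR Q, IS3), rtg_sys_to_lock hr, Multiset.mem_map_of_mem _ hs⟩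

lemma inv_reach {P : SProc} {t : LProc 3 × Store 3}
    (h : ReflTransGen LockStep (TR P, IS3) t) :
    ∃ P', ReflTransGen SysStep P P' ∧ TInv P' t := by
  induction h with
  | refl => exact ⟨P, ReflTransGen.refl, TInv.phase0 P⟩
  | tail _ hstep ih =>
    obtain ⟨P', hr, hinv⟩ := ih
    rcases inv_step hinv hstep with ⟨Q, hsys, hinv'⟩ | hinv'
    · exact ⟨Q, hr.tail hsys, hinv'⟩
    · exact ⟨P', hr, hinv'⟩

lemma may_backward {P : SProc} (h : LMayConv (TR P, IS3)) : SMayConv P := by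
  obtain ⟨t, hr, hs⟩ := h
  obtain ⟨P', hrP, hinv⟩ := inv_reach hr
  obtain ⟨Q, hrQ, hQ⟩ := inv_success hinv hs
  exact ⟨Q, hrP.trans hrQ, hQ⟩

lemma lmay_of_rtg {s t : LProc 3 × Store 3} (h : ReflTransGen LockStep s t)
    (ht : LMayConv t) : LMayConv s := by
  obtain ⟨w, hr, hw⟩ := ht
  exact ⟨w, h.trans hr, hw⟩

/-- If a process has no ques-head component then it has no SysStep. -/
lemma no_sysstep {P : SProc} (hq : ∀ u2 b2, (SSym.ques :: u2, b2) ∉ P) {Q : SProc}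
    (h : SysStep P Q) : False := by
  obtain ⟨u1, u2, b1, b2, R, hP, -⟩ := h
  exact hq u2 b2 (by rw [hP]; exact Multiset.mem_cons_of_mem (Multiset.mem_cons_self _ _))

lemma succ_of_may_stuck {P : SProc} (h : SMayConv P)
    (hq : ∀ u2 b2, (SSym.ques :: u2, b2) ∉ P) : SSuccessful P := by
  obtain ⟨Q, hr, hs⟩ := h
  cases hr.cases_head with
  | inl he => exact he ▸ hs
  | inr hex => obtain ⟨c, hc, -⟩ := hex; exact absurd hc (no_sysstep hq)

end ThreeLockProof3
section ThreeLockProof4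
open SSym LOp Relation

lemma must_forward {P : SProc} (h : SMustConv P) : LMustConv (TR P, IS3) := by
  intro t ht
  obtain ⟨P', hr, hinv⟩ := inv_reach ht
  clear ht
  have key : ∀ (u1 : List SSym) (b1 : Bool) (R : SProc),
      ReflTransGen SysStep P ((SSym.bang :: u1, b1) ::ₘ R) →
      LMayConv (((((LOp.put,1) : LSym 3) :: (LOp.take,0) :: flatS u1, b1) ::ₘ TR R : LProc 3),
        STTF) := by
    intro u1 b1 R hr
    by_cases hq : ∃ u2 b2 R0, R = (SSym.ques :: u2, b2) ::ₘ R0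
    · obtain ⟨u2, b2, R0, rfl⟩ := hq
      have hsys : SysStep ((SSym.bang :: u1, b1) ::ₘ (SSym.ques :: u2, b2) ::ₘ R0)
          ((u1, b1) ::ₘ (u2, b2) ::ₘ R0) := ⟨u1, u2, b1, b2, R0, rfl, rfl⟩
      exact lmay_of_rtg (chain2 u1 b1 u2 b2 R0) (may_forward (h _ (hr.tail hsys)))
    · have hq' : ∀ u2 b2, (SSym.ques :: u2, b2) ∉ ((SSym.bang :: u1, b1) ::ₘ R) := by
        intro u2 b2 hm
        rcases Multiset.mem_cons.mp hm with he | hm'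
        · simp at he
        · exact hq ⟨u2, b2, R.erase _, (Multiset.cons_erase hm').symm⟩
      have hsucc := succ_of_may_stuck (h _ hr) hq'
      have hRsucc : (([], true) : SSub) ∈ R := by
        rcases Multiset.mem_cons.mp hsucc with he | hm
        · simp at he
        · exact hm
      exact ⟨_, ReflTransGen.refl,
        Multiset.mem_cons_of_mem (Multiset.mem_map_of_mem _ hRsucc)⟩
  cases hinv with
  | phase0 P' => exact may_forward (h P' hr)
  | phase1 u1 b1 R => exact lmay_of_rtg (chain1 u1 b1 R) (key u1 b1 R hr)
  | phase2 u1 b1 R => exact key u1 b1 R hr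
  | phase3 u1 b1 u2 b2 R =>
    exact lmay_of_rtg (chain3 u1 b1 u2 b2 R)
      (may_forward (h _ (hr.tail ⟨u1, u2, b1, b2, R, rfl, rfl⟩)))
  | phase4 u1 b1 u2 b2 R =>
    exact lmay_of_rtg (chain4 u1 b1 u2 b2 R)
      (may_forward (h _ (hr.tail ⟨u1, u2, b1, b2, R, rfl, rfl⟩)))
  | phase5 u1 b1 u2 b2 R =>
    exact lmay_of_rtg (chain5 u1 b1 u2 b2 R)
      (may_forward (h _ (hr.tail ⟨u1, u2, b1, b2, R, rfl, rfl⟩)))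

lemma must_backward {P : SProc} (h : LMustConv (TR P, IS3)) : SMustConv P := by
  intro Q hr
  exact may_backward (h _ (rtg_sys_to_lock hr))

end ThreeLockProof4

/-- the translation `τ(!) = P_1T_3P_2T_1`, `τ(?) = P_3T_2` with
initial store `(□,■,■)` is correct. -/
theorem three_lock_translation_correct : Correct IS3 tb3 tq3 := by
  intro P
  exact ⟨⟨may_forward, may_backward⟩, ⟨must_forward, must_backward⟩⟩
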